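/- Let X be a real Banach space and let Y = Y₁ ⊕_a Y₂ be the absolute sum of real Banach spaces Y₁ and Y₂ with respect to an absolute norm N (so Y₁ is an absolute summand of Y). If the set NA(X, Y₁ ⊕_a Y₂) of norm attaining operators is dense in the space L(X, Y₁ ⊕_a Y₂) of all bounded linear operators, then NA(X, Y₁) is dense in L(X, Y₁). -/

import Mathlib

/-!
Embed `T` as `(T, 0)` and approximate it by a norm attaining `S = (S₁, S₂)`, attaining its norm
at `x₀`; then `S₁` is close to `T` and `S₂` is small. Let `f` be a norming functional of `S x₀`
and `u = S₁ x₀ / ‖S₁ x₀‖`. The operator `x ↦ f(u, 0) • S₁ x + f(0, S₂ x) • u` is dominated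
pointwise by `S`, because `|f(w, 0)| + |f(0, z)| = max |f(w, ±z)| ≤ N(‖w‖, ‖z‖)`, and it takes
the value `‖S‖ • u` at `x₀`, so it attains its norm; it differs from `S₁` by `O(‖S₂‖)`.
-/

open Filter Topology

/-- `N` is an absolute norm on `ℝ²`: a norm with `N(1,0)=N(0,1)=1` and
`N(s,t)=N(|s|,|t|)`. -/
structure IsAbsoluteNorm (N : ℝ → ℝ → ℝ) : Prop where
  nonneg : ∀ s t : ℝ, 0 ≤ N s t
  eq_zero_iff : ∀ s t : ℝ, N s t = 0 ↔ s = 0 ∧ t = 0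
  triangle : ∀ s₁ t₁ s₂ t₂ : ℝ, N (s₁ + s₂) (t₁ + t₂) ≤ N s₁ t₁ + N s₂ t₂
  smul : ∀ c s t : ℝ, N (c * s) (c * t) = |c| * N s t
  one_zero : N 1 0 = 1
  zero_one : N 0 1 = 1
  abs_eq : ∀ s t : ℝ, N s t = N |s| |t|

/-- The set of norm attaining bounded linear operators from `X` to `Y`. -/
def NA (X Y : Type*) [NormedAddCommGroup X] [NormedSpace ℝ X]
    [NormedAddCommGroup Y] [NormedSpace ℝ Y] : Set (X →L[ℝ] Y) :=
  {T | ∃ x₀ : X, ‖x₀‖ = 1 ∧ ‖T x₀‖ = ‖T‖}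

theorem abs_add_abs_le_of_abs_add_le_of_abs_sub_le {p q B : ℝ} (hadd : |p + q| ≤ B)
    (hsub : |p - q| ≤ B) : |p| + |q| ≤ B := by
  rw [abs_le] at hadd hsub
  rcases abs_cases p with ⟨hp, -⟩ | ⟨hp, -⟩ <;> rcases abs_cases q with ⟨hq, -⟩ | ⟨hq, -⟩ <;>
    linarith

theorem mem_NA_of_norm_apply_le {X Y Z : Type*} [NormedAddCommGroup X] [NormedSpace ℝ X]
    [NormedAddCommGroup Y] [NormedSpace ℝ Y] [NormedAddCommGroup Z] [NormedSpace ℝ Z]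
    {S : X →L[ℝ] Y} {T : X →L[ℝ] Z} {x₀ : X} (hx₀ : ‖x₀‖ = 1) (hS : ‖S x₀‖ = ‖S‖)
    (hle : ∀ x, ‖T x‖ ≤ ‖S x‖) (hT : ‖T x₀‖ = ‖S x₀‖) : T ∈ NA X Z := by
  refine ⟨x₀, hx₀, le_antisymm (T.unit_le_opNorm x₀ hx₀.le) ?_⟩
  refine T.opNorm_le_bound (norm_nonneg _) fun x ↦ ?_
  calc ‖T x‖ ≤ ‖S x‖ := hle x
    _ ≤ ‖S‖ * ‖x‖ := S.le_opNorm x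
    _ = ‖T x₀‖ * ‖x‖ := by rw [hT, hS]

namespace IsAbsoluteNorm

variable {N : ℝ → ℝ → ℝ}

theorem apply_zero_right (hN : IsAbsoluteNorm N) (s : ℝ) : N s 0 = |s| := by
  simpa [hN.one_zero] using hN.smul s 1 0

theorem apply_zero_left (hN : IsAbsoluteNorm N) (t : ℝ) : N 0 t = |t| := by
  simpa [hN.zero_one] using hN.smul t 0 1

theorem apply_neg_left (hN : IsAbsoluteNorm N) (s t : ℝ) : N (-s) t = N s t := by
  rw [hN.abs_eq, abs_neg, ← hN.abs_eq]

theorem apply_neg_right (hN : IsAbsoluteNorm N) (s t : ℝ) : N s (-t) = N s t := by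
  rw [hN.abs_eq, abs_neg, ← hN.abs_eq]

theorem abs_left_le (hN : IsAbsoluteNorm N) (s t : ℝ) : |s| ≤ N s t := by
  have h := hN.triangle s t s (-t)
  rw [add_neg_cancel, ← two_mul, hN.apply_neg_right, hN.apply_zero_right, abs_mul, abs_two] at h
  linarith

theorem abs_right_le (hN : IsAbsoluteNorm N) (s t : ℝ) : |t| ≤ N s t := by
  have h := hN.triangle s t (-s) t
  rw [add_neg_cancel, ← two_mul, hN.apply_neg_left, hN.apply_zero_left, abs_mul, abs_two] at h
  linarith

theorem le_abs_add_abs (hN : IsAbsoluteNorm N) (s t : ℝ) : N s t ≤ |s| + |t| := by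
  simpa [hN.apply_zero_right, hN.apply_zero_left] using hN.triangle s 0 0 t

end IsAbsoluteNorm

namespace AbsoluteSum

variable {X Y Y₁ Y₂ : Type*} [NormedAddCommGroup X] [NormedSpace ℝ X]
  [NormedAddCommGroup Y] [NormedSpace ℝ Y] [NormedAddCommGroup Y₁] [NormedSpace ℝ Y₁]
  [NormedAddCommGroup Y₂] [NormedSpace ℝ Y₂] {N : ℝ → ℝ → ℝ} {e : Y ≃L[ℝ] Y₁ × Y₂}

def IsAbsoluteSum (N : ℝ → ℝ → ℝ) (e : Y ≃L[ℝ] Y₁ × Y₂) : Prop :=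
  ∀ y : Y, ‖y‖ = N ‖(e y).1‖ ‖(e y).2‖

def fstL (e : Y ≃L[ℝ] Y₁ × Y₂) : Y →L[ℝ] Y₁ :=
  ContinuousLinearMap.fst ℝ Y₁ Y₂ ∘L (e : Y →L[ℝ] Y₁ × Y₂)

def sndL (e : Y ≃L[ℝ] Y₁ × Y₂) : Y →L[ℝ] Y₂ :=
  ContinuousLinearMap.snd ℝ Y₁ Y₂ ∘L (e : Y →L[ℝ] Y₁ × Y₂)

def inlL (e : Y ≃L[ℝ] Y₁ × Y₂) : Y₁ →L[ℝ] Y :=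
  (e.symm : Y₁ × Y₂ →L[ℝ] Y) ∘L ContinuousLinearMap.inl ℝ Y₁ Y₂

def inrL (e : Y ≃L[ℝ] Y₁ × Y₂) : Y₂ →L[ℝ] Y :=
  (e.symm : Y₁ × Y₂ →L[ℝ] Y) ∘L ContinuousLinearMap.inr ℝ Y₁ Y₂

@[simp] theorem fstL_apply (y : Y) : fstL e y = (e y).1 := rfl

@[simp] theorem sndL_apply (y : Y) : sndL e y = (e y).2 := rfl

@[simp] theorem inlL_apply (w : Y₁) : inlL e w = e.symm (w, 0) := rfl

@[simp] theorem inrL_apply (z : Y₂) : inrL e z = e.symm (0, z) := rfl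

theorem inlL_fstL_add_inrL_sndL (y : Y) : inlL e (fstL e y) + inrL e (sndL e y) = y := by
  simp [← map_add]

theorem fstL_comp_inlL : fstL e ∘L inlL e = ContinuousLinearMap.id ℝ Y₁ := by
  ext; simp

theorem sndL_comp_inlL : sndL e ∘L inlL e = 0 := by
  ext; simp

theorem norm_symm_apply (he : IsAbsoluteSum N e) (w : Y₁) (z : Y₂) :
    ‖e.symm (w, z)‖ = N ‖w‖ ‖z‖ := by
  simp [he (e.symm (w, z))]

theorem norm_inlL_apply (hN : IsAbsoluteNorm N) (he : IsAbsoluteSum N e) (w : Y₁) :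
    ‖inlL e w‖ = ‖w‖ := by
  simp [norm_symm_apply he, hN.apply_zero_right]

theorem norm_inrL_apply (hN : IsAbsoluteNorm N) (he : IsAbsoluteSum N e) (z : Y₂) :
    ‖inrL e z‖ = ‖z‖ := by
  simp [norm_symm_apply he, hN.apply_zero_left]

theorem norm_fstL_apply_le (hN : IsAbsoluteNorm N) (he : IsAbsoluteSum N e) (y : Y) :
    ‖fstL e y‖ ≤ ‖y‖ := by
  simpa [← he y] using hN.abs_left_le ‖(e y).1‖ ‖(e y).2‖

theorem norm_sndL_apply_le (hN : IsAbsoluteNorm N) (he : IsAbsoluteSum N e) (y : Y) :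
    ‖sndL e y‖ ≤ ‖y‖ := by
  simpa [← he y] using hN.abs_right_le ‖(e y).1‖ ‖(e y).2‖

theorem norm_fstL_comp_le (hN : IsAbsoluteNorm N) (he : IsAbsoluteSum N e)
    (S : X →L[ℝ] Y) : ‖fstL e ∘L S‖ ≤ ‖S‖ :=
  (fstL e ∘L S).opNorm_le_bound (norm_nonneg S) fun x ↦ calc
    ‖fstL e (S x)‖ ≤ ‖S x‖ := norm_fstL_apply_le hN he (S x)
    _ ≤ ‖S‖ * ‖x‖ := S.le_opNorm x

theorem norm_sndL_comp_le (hN : IsAbsoluteNorm N) (he : IsAbsoluteSum N e)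
    (S : X →L[ℝ] Y) : ‖sndL e ∘L S‖ ≤ ‖S‖ :=
  (sndL e ∘L S).opNorm_le_bound (norm_nonneg S) fun x ↦ calc
    ‖sndL e (S x)‖ ≤ ‖S x‖ := norm_sndL_apply_le hN he (S x)
    _ ≤ ‖S‖ * ‖x‖ := S.le_opNorm x

theorem norm_inlL_comp (hN : IsAbsoluteNorm N) (he : IsAbsoluteSum N e)
    (T : X →L[ℝ] Y₁) : ‖inlL e ∘L T‖ = ‖T‖ :=
  ContinuousLinearMap.opNorm_ext _ _ fun x ↦ norm_inlL_apply hN he (T x)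

theorem abs_apply_inlL_add_abs_apply_inrL_le (he : IsAbsoluteSum N e) {f : StrongDual ℝ Y}
    (hf : ‖f‖ ≤ 1) (w : Y₁) (z : Y₂) : |f (inlL e w)| + |f (inrL e z)| ≤ N ‖w‖ ‖z‖ := by
  have hle (y : Y) : |f y| ≤ ‖y‖ := by simpa using f.le_of_opNorm_le hf y
  refine abs_add_abs_le_of_abs_add_le_of_abs_sub_le ?_ ?_
  · simpa [← map_add, norm_symm_apply he] using hle (e.symm (w, z))
  · simpa [← map_sub, norm_symm_apply he] using hle (e.symm (w, -z))

def correction (e : Y ≃L[ℝ] Y₁ × Y₂) (f : StrongDual ℝ Y) (u : Y₁) (S : X →L[ℝ] Y) :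
    X →L[ℝ] Y₁ :=
  f (inlL e u) • (fstL e ∘L S) + (f ∘L inrL e ∘L sndL e ∘L S).smulRight u

theorem correction_apply (f : StrongDual ℝ Y) (u : Y₁) (S : X →L[ℝ] Y) (x : X) :
    correction e f u S x = f (inlL e u) • fstL e (S x) + f (inrL e (sndL e (S x))) • u :=
  rfl

theorem norm_correction_apply_le (he : IsAbsoluteSum N e)
    {f : StrongDual ℝ Y} (hf : ‖f‖ ≤ 1) {u : Y₁} (hu : ‖u‖ = 1) (S : X →L[ℝ] Y) (x : X) :
    ‖correction e f u S x‖ ≤ ‖S x‖ := calc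
  ‖correction e f u S x‖
      ≤ |f (inlL e u)| * ‖fstL e (S x)‖ + |f (inrL e (sndL e (S x)))| := by
    rw [correction_apply]
    refine (norm_add_le _ _).trans_eq ?_
    rw [norm_smul, norm_smul, hu, mul_one, Real.norm_eq_abs, Real.norm_eq_abs]
  _ = |f (inlL e (‖fstL e (S x)‖ • u))| + |f (inrL e (sndL e (S x)))| := by
    rw [map_smul, map_smul, smul_eq_mul, abs_mul, abs_norm, mul_comm]
  _ ≤ N ‖‖fstL e (S x)‖ • u‖ ‖sndL e (S x)‖ := abs_apply_inlL_add_abs_apply_inrL_le he hf _ _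
  _ = ‖S x‖ := by rw [norm_smul, hu, mul_one, norm_norm, he (S x), fstL_apply, sndL_apply]

theorem norm_correction_sub_le (hN : IsAbsoluteNorm N)
    (he : IsAbsoluteSum N e) {f : StrongDual ℝ Y} (hf : ‖f‖ ≤ 1) {u : Y₁}
    (hu : ‖u‖ = 1) (S : X →L[ℝ] Y) :
    ‖correction e f u S - fstL e ∘L S‖ ≤
      |1 - f (inlL e u)| * ‖fstL e ∘L S‖ + ‖sndL e ∘L S‖ := by
  have hψ : ‖f ∘L inrL e ∘L sndL e ∘L S‖ ≤ ‖sndL e ∘L S‖ := by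
    refine ContinuousLinearMap.opNorm_le_bound _ (norm_nonneg _) fun x ↦ ?_
    calc ‖f (inrL e (sndL e (S x)))‖ ≤ ‖f‖ * ‖inrL e (sndL e (S x))‖ := f.le_opNorm _
      _ ≤ ‖sndL e (S x)‖ := by
        rw [norm_inrL_apply hN he]; exact mul_le_of_le_one_left (norm_nonneg _) hf
      _ ≤ ‖sndL e ∘L S‖ * ‖x‖ := (sndL e ∘L S).le_opNorm x
  have hsplit : correction e f u S - fstL e ∘L S =
      (f (inlL e u) - 1) • (fstL e ∘L S) + (f ∘L inrL e ∘L sndL e ∘L S).smulRight u := by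
    rw [correction, sub_smul, one_smul]; abel
  rw [hsplit]
  refine (norm_add_le _ _).trans ?_
  rw [norm_smul, Real.norm_eq_abs, abs_sub_comm, ContinuousLinearMap.norm_smulRight_apply, hu,
    mul_one]
  gcongr

theorem exists_mem_NA_norm_sub_fstL_comp_le (hN : IsAbsoluteNorm N)
    (he : IsAbsoluteSum N e) {S : X →L[ℝ] Y} {x₀ : X} (hx₀ : ‖x₀‖ = 1)
    (hS : ‖S x₀‖ = ‖S‖) (ha : 0 < ‖fstL e (S x₀)‖) :
    ∃ T ∈ NA X Y₁, ‖T - fstL e ∘L S‖ ≤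
      ‖sndL e ∘L S‖ * (‖fstL e ∘L S‖ / ‖fstL e (S x₀)‖ + 1) := by
  set a := ‖fstL e (S x₀)‖
  set b := ‖sndL e (S x₀)‖
  obtain ⟨f, hf, hfS⟩ := exists_dual_vector'' ℝ (S x₀)
  rw [RCLike.ofReal_real_eq_id, id] at hfS
  set u : Y₁ := a⁻¹ • fstL e (S x₀)
  have hu : ‖u‖ = 1 := by rw [norm_smul, norm_inv, norm_norm, inv_mul_cancel₀ ha.ne']
  have hau : a • u = fstL e (S x₀) := smul_inv_smul₀ ha.ne' _
  have hfS_split : f (S x₀) = a * f (inlL e u) + f (inrL e (sndL e (S x₀))) := by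
    rw [← smul_eq_mul, ← map_smul, ← map_smul, hau, ← map_add, inlL_fstL_add_inrL_sndL]
  have hφ : |f (inlL e u)| ≤ 1 := by
    simpa only [one_mul, norm_inlL_apply hN he, hu, Real.norm_eq_abs] using
      f.le_of_opNorm_le hf (inlL e u)
  have hψ : |f (inrL e (sndL e (S x₀)))| ≤ b := by
    simpa only [one_mul, norm_inrL_apply hN he, Real.norm_eq_abs] using
      f.le_of_opNorm_le hf (inrL e (sndL e (S x₀)))
  have ha_le : a ≤ ‖S x₀‖ := norm_fstL_apply_le hN he (S x₀)
  -- `f` norms `S x₀`, so `a f(u, 0) = ‖S x₀‖ - f(0, S₂ x₀)` is at least `a - b`.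
  have hcoeff : |1 - f (inlL e u)| ≤ b / a := by
    rw [abs_of_nonneg (by linarith [le_abs_self (f (inlL e u))]), le_div_iff₀ ha]
    linarith [le_abs_self (f (inrL e (sndL e (S x₀))))]
  have hb : b ≤ ‖sndL e ∘L S‖ := (sndL e ∘L S).unit_le_opNorm x₀ hx₀.le
  refine ⟨correction e f u S, mem_NA_of_norm_apply_le hx₀ hS
    (norm_correction_apply_le he hf hu S) ?_, ?_⟩
  · rw [correction_apply, ← hau, smul_smul, ← add_smul, mul_comm, ← hfS_split, hfS, norm_smul,
      hu, mul_one, Real.norm_eq_abs, abs_norm]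
  · calc ‖correction e f u S - fstL e ∘L S‖
        ≤ |1 - f (inlL e u)| * ‖fstL e ∘L S‖ + ‖sndL e ∘L S‖ :=
          norm_correction_sub_le hN he hf hu S
      _ ≤ ‖sndL e ∘L S‖ / a * ‖fstL e ∘L S‖ + ‖sndL e ∘L S‖ := by
          gcongr; exact hcoeff.trans (by gcongr)
      _ = ‖sndL e ∘L S‖ * (‖fstL e ∘L S‖ / a + 1) := by ring

theorem exists_mem_NA_near_of_near_inlL_comp (hN : IsAbsoluteNorm N)
    (he : IsAbsoluteSum N e) {T : X →L[ℝ] Y₁} {S : X →L[ℝ] Y}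
    (hS : S ∈ NA X Y) {δ : ℝ} (hδ : δ ≤ ‖T‖ / 4) (hST : ‖S - inlL e ∘L T‖ < δ) :
    ∃ T' ∈ NA X Y₁, ‖T' - T‖ < 5 * δ := by
  obtain ⟨x₀, hx₀, hSx₀⟩ := hS
  have hfst : ‖fstL e ∘L S - T‖ < δ := by
    have h := norm_fstL_comp_le hN he (S - inlL e ∘L T)
    rw [ContinuousLinearMap.comp_sub, ← ContinuousLinearMap.comp_assoc, fstL_comp_inlL,
      ContinuousLinearMap.id_comp] at h
    exact h.trans_lt hST
  have hsnd : ‖sndL e ∘L S‖ < δ := by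
    have h := norm_sndL_comp_le hN he (S - inlL e ∘L T)
    rw [ContinuousLinearMap.comp_sub, ← ContinuousLinearMap.comp_assoc, sndL_comp_inlL,
      ContinuousLinearMap.zero_comp, sub_zero] at h
    exact h.trans_lt hST
  have hS_le : ‖S‖ ≤ ‖T‖ + δ := by
    have := norm_sub_norm_le S (inlL e ∘L T)
    rw [norm_inlL_comp hN he] at this
    linarith
  have hS_ge : ‖T‖ - δ ≤ ‖S‖ := by
    have := norm_sub_norm_le (inlL e ∘L T) S
    rw [norm_inlL_comp hN he, norm_sub_rev] at this
    linarith
  have ha : ‖T‖ / 2 ≤ ‖fstL e (S x₀)‖ := by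
    have h := hN.le_abs_add_abs ‖(e (S x₀)).1‖ ‖(e (S x₀)).2‖
    rw [abs_norm, abs_norm, ← he (S x₀), hSx₀, ← fstL_apply, ← sndL_apply] at h
    have hb : ‖sndL e (S x₀)‖ ≤ ‖sndL e ∘L S‖ := (sndL e ∘L S).unit_le_opNorm x₀ hx₀.le
    linarith
  have hδ₀ : 0 < δ := (norm_nonneg _).trans_lt hST
  have hratio : ‖fstL e ∘L S‖ / ‖fstL e (S x₀)‖ ≤ 5 / 2 := by
    rw [div_le_iff₀ (by linarith)]
    linarith [norm_fstL_comp_le hN he S]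
  obtain ⟨T', hT', hdist⟩ := exists_mem_NA_norm_sub_fstL_comp_le hN he hx₀ hSx₀ (by linarith)
  refine ⟨T', hT', ?_⟩
  calc ‖T' - T‖ ≤ ‖T' - fstL e ∘L S‖ + ‖fstL e ∘L S - T‖ :=
        norm_sub_le_norm_sub_add_norm_sub _ _ _
    _ < δ * (5 / 2 + 1) + δ := add_lt_add_of_le_of_lt
      (hdist.trans (mul_le_mul hsnd.le (by gcongr) (by positivity) hδ₀.le)) hfst
    _ ≤ 5 * δ := by linarith

end AbsoluteSum

theorem na_dense_absolute_summand_range_general (X Y Y₁ Y₂ : Type*)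
    [NormedAddCommGroup X] [NormedSpace ℝ X]
    [NormedAddCommGroup Y] [NormedSpace ℝ Y]
    [NormedAddCommGroup Y₁] [NormedSpace ℝ Y₁]
    [NormedAddCommGroup Y₂] [NormedSpace ℝ Y₂]
    (N : ℝ → ℝ → ℝ) (hN : IsAbsoluteNorm N)
    (e : Y ≃L[ℝ] Y₁ × Y₂) (he : ∀ y : Y, ‖y‖ = N ‖(e y).1‖ ‖(e y).2‖)
    (h : Dense (NA X Y)) : Dense (NA X Y₁) := by
  rw [Metric.dense_iff]
  intro T ε hε
  rcases eq_or_ne T 0 with rfl | hT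
  · obtain ⟨-, x, hx, -⟩ := h.nonempty
    exact ⟨0, Metric.mem_ball_self hε, x, hx, by simp⟩
  set δ := min (ε / 5) (‖T‖ / 4)
  have hδ : 0 < δ := lt_min (by linarith) (by positivity)
  obtain ⟨S, hS, hSNA⟩ := Metric.dense_iff.mp h (AbsoluteSum.inlL e ∘L T) δ hδ
  rw [Metric.mem_ball, dist_eq_norm] at hS
  obtain ⟨T', hT', hdist⟩ :=
    AbsoluteSum.exists_mem_NA_near_of_near_inlL_comp hN he hSNA (min_le_right _ _) hS
  refine ⟨T', ?_, hT'⟩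
  rw [Metric.mem_ball, dist_eq_norm]
  linarith [min_le_left (ε / 5) (‖T‖ / 4)]

theorem na_dense_absolute_summand_range (X Y Y₁ Y₂ : Type*)
    [NormedAddCommGroup X] [NormedSpace ℝ X] [CompleteSpace X]
    [NormedAddCommGroup Y] [NormedSpace ℝ Y] [CompleteSpace Y]
    [NormedAddCommGroup Y₁] [NormedSpace ℝ Y₁] [CompleteSpace Y₁]
    [NormedAddCommGroup Y₂] [NormedSpace ℝ Y₂] [CompleteSpace Y₂]
    (N : ℝ → ℝ → ℝ) (hN : IsAbsoluteNorm N)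
    (e : Y ≃L[ℝ] Y₁ × Y₂) (he : ∀ y : Y, ‖y‖ = N ‖(e y).1‖ ‖(e y).2‖)
    (h : Dense (NA X Y)) : Dense (NA X Y₁) :=
  na_dense_absolute_summand_range_general X Y Y₁ Y₂ N hN e he h
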